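/- arXiv:1407.1685 — 3 statements merged into one kernel-verified Lean document; each statement's English description precedes it below -/
import Mathlib

section
/- For every real number θ > 1, the series ∑_{i=1}^∞ ∏_{j=1}^{i} j/(j+θ) converges and its sum equals 1/(θ−1). -/
open Filter Finset Real

/-- For every real `θ > 1`, the series `∑_{i=1}^∞ ∏_{j=1}^{i} j/(j+θ)` converges
with sum `1/(θ-1)`. (The index `i : ℕ` below corresponds to `i + 1 ≥ 1`.) -/
theorem sum_prod_div_eq_one_div_sub_one (θ : ℝ) (hθ : 1 < θ) :
    HasSum (fun i : ℕ => ∏ j ∈ Finset.Icc 1 (i + 1), (j : ℝ) / ((j : ℝ) + θ))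
      (1 / (θ - 1)) := by
  have hθ0 : (0:ℝ) < θ := by linarith
  set P : ℕ → ℝ := fun n => ∏ j ∈ Finset.Icc 1 n, (j : ℝ) / ((j : ℝ) + θ) with hPdef
  have hPpos : ∀ n, 0 < P n := by
    intro n
    apply Finset.prod_pos
    intro j hj
    simp only [Finset.mem_Icc] at hj
    have : (1:ℝ) ≤ (j:ℝ) := by exact_mod_cast hj.1
    positivity
  -- a n = (n+1) * P n
  set a : ℕ → ℝ := fun n => ((n : ℝ) + 1) * P n with hadef
  have ha0 : a 0 = 1 := by simp [hadef, hPdef]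
  have hPsucc : ∀ n : ℕ, P (n + 1) = P n * (((n:ℝ)+1) / (((n:ℝ)+1) + θ)) := by
    intro n
    have h := Finset.prod_Icc_succ_top (Nat.succ_le_succ (Nat.zero_le n))
      (fun j : ℕ => (j : ℝ) / ((j : ℝ) + θ))
    simpa [hPdef] using h
  have hstep : ∀ n : ℕ, a n - a (n + 1) = (θ - 1) * P (n + 1) := by
    intro n
    have hne : ((n:ℝ)+1) + θ ≠ 0 := by positivity
    rw [hadef]
    simp only
    rw [hPsucc n]
    push_cast
    field_simp
    ring
  -- telescoping partial sums
  have key : ∀ n : ℕ, ∑ i ∈ Finset.range n, P (i + 1) = (1 - a n) / (θ - 1) := by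
    intro n
    induction n with
    | zero => simp [ha0]
    | succ n ih =>
      rw [Finset.sum_range_succ, ih]
      have hθ1 : θ - 1 ≠ 0 := by linarith
      have := hstep n
      field_simp
      linarith [hstep n]
  -- a n = ∏ (j+1)/(j+θ)
  have haprod : ∀ n : ℕ, a n = ∏ j ∈ Finset.Icc 1 n, ((j:ℝ)+1) / ((j:ℝ)+θ) := by
    intro n
    induction n with
    | zero => simp [ha0]
    | succ n ih =>
      rw [Finset.prod_Icc_succ_top (Nat.succ_le_succ (Nat.zero_le n)), ← ih, hadef]
      simp only
      rw [hPsucc n]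
      have hne : ((n:ℝ)+1) + θ ≠ 0 := by positivity
      push_cast
      field_simp
  -- the bound via Bernoulli
  set r : ℝ := min (θ - 1) 1 with hrdef
  have hr0 : 0 < r := lt_min (by linarith) one_pos
  have hr1 : r ≤ 1 := min_le_right _ _
  have hbound : ∀ n : ℕ, a n ≤ (2 / ((n:ℝ) + 2)) ^ r := by
    intro n
    rw [haprod]
    -- telescoping product
    have htel : ∏ j ∈ Finset.Icc 1 n, ((j:ℝ)+1) / ((j:ℝ)+2) = 2 / ((n:ℝ) + 2) := by
      induction n with
      | zero => norm_num
      | succ n ih =>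
        rw [Finset.prod_Icc_succ_top (Nat.succ_le_succ (Nat.zero_le n)), ih]
        have h1 : ((n:ℝ)+2) ≠ 0 := by positivity
        have h2 : ((n:ℝ)+3) ≠ 0 := by positivity
        push_cast
        field_simp
        ring
    rw [← htel, ← Real.finset_prod_rpow _ _ (fun j _ => by positivity) r]
    apply Finset.prod_le_prod
    · intro j hj
      positivity
    · intro j hj
      -- (j+1)/(j+θ) ≤ ((j+1)/(j+2))^r
      have hj1 : (0:ℝ) < (j:ℝ) + 1 := by positivity
      have hj2 : (0:ℝ) < (j:ℝ) + 2 := by positivity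
      have hjθ : (0:ℝ) < (j:ℝ) + θ := by positivity
      have hbern : (1 + 1/((j:ℝ)+1)) ^ r ≤ 1 + r * (1/((j:ℝ)+1)) := by
        apply rpow_one_add_le_one_add_mul_self _ hr0.le hr1
        have : (0:ℝ) ≤ 1/((j:ℝ)+1) := by positivity
        linarith
      have h1 : ((j:ℝ)+2)/((j:ℝ)+1) = 1 + 1/((j:ℝ)+1) := by field_simp; ring
      have h2 : 1 + r * (1/((j:ℝ)+1)) ≤ ((j:ℝ)+θ)/((j:ℝ)+1) := by
        have hrθ : r ≤ θ - 1 := min_le_left _ _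
        have hθeq : ((j:ℝ)+θ)/((j:ℝ)+1) = 1 + (θ-1) * (1/((j:ℝ)+1)) := by field_simp; ring
        rw [hθeq]
        have := mul_le_mul_of_nonneg_right hrθ (le_of_lt (by positivity : (0:ℝ) < 1/((j:ℝ)+1)))
        linarith
      have hmain : (((j:ℝ)+2)/((j:ℝ)+1)) ^ r ≤ ((j:ℝ)+θ)/((j:ℝ)+1) := by
        rw [h1]; exact hbern.trans h2
      have hpos1 : (0:ℝ) < (((j:ℝ)+2)/((j:ℝ)+1)) ^ r := by positivity
      calc ((j:ℝ)+1)/((j:ℝ)+θ) = (((j:ℝ)+θ)/((j:ℝ)+1))⁻¹ := by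
            rw [inv_div]
        _ ≤ ((((j:ℝ)+2)/((j:ℝ)+1)) ^ r)⁻¹ := by
            exact inv_anti₀ hpos1 hmain
        _ = (((j:ℝ)+1)/((j:ℝ)+2)) ^ r := by
            rw [← Real.inv_rpow (by positivity), inv_div]
  -- a n → 0
  have hatend : Tendsto a atTop (nhds 0) := by
    have hub : Tendsto (fun n : ℕ => (2 / ((n:ℝ) + 2)) ^ r) atTop (nhds 0) := by
      have h1 : Tendsto (fun n : ℕ => ((n:ℝ) + 2) / 2) atTop atTop := by
        apply Tendsto.atTop_div_const (by norm_num)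
        exact tendsto_atTop_add_const_right _ 2 tendsto_natCast_atTop_atTop
      have h2 := (tendsto_rpow_neg_atTop hr0).comp h1
      refine h2.congr fun n => ?_
      rw [Function.comp, Real.rpow_neg (by positivity), ← Real.inv_rpow (by positivity), inv_div]
    have hlb : Tendsto (fun _ : ℕ => (0:ℝ)) atTop (nhds 0) := tendsto_const_nhds
    exact tendsto_of_tendsto_of_tendsto_of_le_of_le hlb hub
      (fun n => by have := hPpos n; rw [hadef]; positivity) hbound
  rw [hasSum_iff_tendsto_nat_of_nonneg (fun i => (hPpos (i+1)).le)]
  have : Tendsto (fun n : ℕ => (1 - a n) / (θ - 1)) atTop (nhds ((1 - 0) / (θ - 1))) := by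
    exact ((tendsto_const_nhds.sub hatend)).div_const _
  simp only [sub_zero] at this
  exact Tendsto.congr (fun n => (key n).symm) this
end

section
/- Let (τ_j)_{j≥1} be a sequence of independent real random variables such that τ_j is exponentially distributed with rate j, and let (ν_i)_{i≥1} be a sequence of independent, identically distributed, integrable nonnegative real random variables with common mean m, with the family (ν_i) independent of the family (τ_j). Then for every real θ > 1, the random series ∑_{i=1}^∞ ν_i · exp(−θ(τ_1 + ⋯ + τ_i)) has expectation E[∑_{i=1}^∞ ν_i e^{−θ(τ_1+⋯+τ_i)}] = m/(θ−1). -/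
open MeasureTheory ProbabilityTheory
open scoped ENNReal

section Aux

lemma exp_mgf {r θ : ℝ} (hr : 0 < r) (hθ : 0 < θ) :
    ∫⁻ x, ENNReal.ofReal (Real.exp (-θ * x)) ∂(expMeasure r)
      = ENNReal.ofReal (r / (r + θ)) := by
  have hrθ : 0 < r + θ := by linarith
  have hmeas : Measurable fun x : ℝ => ENNReal.ofReal (Real.exp (-θ * x)) := by
    fun_prop
  have hgm : Measurable (gammaPDF 1 r) := (measurable_gammaPDFReal 1 r).ennreal_ofReal
  rw [expMeasure, gammaMeasure, lintegral_withDensity_eq_lintegral_mul _ hgm hmeas]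
  have key : ∀ x : ℝ, (gammaPDF 1 r * fun x => ENNReal.ofReal (Real.exp (-θ * x))) x
      = ENNReal.ofReal (r / (r + θ)) * exponentialPDF (r + θ) x := by
    intro x
    rcases lt_or_ge x 0 with hx | hx
    · simp only [Pi.mul_apply, gammaPDF_of_neg hx, exponentialPDF_of_neg hx, zero_mul, mul_zero]
    · simp only [Pi.mul_apply]
      rw [show gammaPDF 1 r x = exponentialPDF r x from rfl,
        exponentialPDF_of_nonneg hx, exponentialPDF_of_nonneg hx,
        ← ENNReal.ofReal_mul (by positivity), ← ENNReal.ofReal_mul (by positivity)]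
      congr 1
      have h1 : r / (r + θ) * ((r + θ) * Real.exp (-((r + θ) * x)))
          = r * Real.exp (-((r + θ) * x)) := by field_simp
      rw [h1, mul_assoc, ← Real.exp_add]
      ring_nf
  simp only [key]
  rw [lintegral_const_mul' _ _ ENNReal.ofReal_ne_top,
    lintegral_exponentialPDF_eq_one hrθ, mul_one]

lemma telescope_sum {θ : ℝ} (hθ : 1 < θ) :
    HasSum (fun k : ℕ => ∏ j ∈ Finset.Icc 1 (k + 1), ((j : ℝ) / (j + θ))) (1 / (θ - 1)) := by
  set a : ℕ → ℝ := fun n => ∏ j ∈ Finset.Icc 1 n, ((j : ℝ) / (j + θ)) with ha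
  have hθ0 : 0 < θ := by linarith
  have hθ1 : θ - 1 > 0 := by linarith
  have ha0 : a 0 = 1 := by simp [ha]
  have hpos : ∀ n, 0 < a n := by
    intro n
    apply Finset.prod_pos
    intro j hj
    have hj1 : 1 ≤ j := (Finset.mem_Icc.mp hj).1
    have : (0:ℝ) < j := Nat.cast_pos.mpr (by omega)
    positivity
  have hrec : ∀ n : ℕ, a (n + 1) = a n * ((n + 1 : ℝ) / ((n + 1 : ℝ) + θ)) := by
    intro n
    show (∏ j ∈ Finset.Icc 1 (n+1), ((j : ℝ) / (j + θ))) = _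
    rw [Finset.prod_Icc_succ_top (by omega)]
    push_cast
    ring
  -- partial sums
  have hps : ∀ n : ℕ, ∑ k ∈ Finset.range n, a (k + 1)
      = (1 - ((n:ℝ) + 1) * a n) / (θ - 1) := by
    intro n
    induction n with
    | zero => simp [ha0]
    | succ n ih =>
      rw [Finset.sum_range_succ, ih, hrec n]
      have hne : ((n:ℝ) + 1) + θ ≠ 0 := by positivity
      field_simp
      push_cast
      ring
  -- c is antitone, nonneg; L = inf
  set c : ℕ → ℝ := fun n => ((n:ℝ) + 1) * a n with hc
  have hcpos : ∀ n, 0 < c n := fun n => by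
    have := hpos n; simp only [hc]; positivity
  have hcanti : Antitone c := by
    apply antitone_nat_of_succ_le
    intro n
    simp only [hc, hrec n]
    push_cast
    rw [show ((n:ℝ)+1+1) * (a n * ((n+1)/((n+1)+θ))) = a n * (((n+2)*(n+1))/((n+1)+θ)) by ring]
    have h1 : ((n:ℝ)+2)*((n:ℝ)+1)/(((n:ℝ)+1)+θ) ≤ (n:ℝ)+1 := by
      rw [div_le_iff₀ (by positivity)]
      nlinarith
    calc a n * (((n:ℝ)+2)*((n:ℝ)+1)/(((n:ℝ)+1)+θ)) ≤ a n * ((n:ℝ)+1) :=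
          mul_le_mul_of_nonneg_left h1 (hpos n).le
      _ = ((n:ℝ)+1) * a n := by ring
  have hcpos' : ∀ n : ℕ, 0 < ((n:ℝ) + 1) * a n := hcpos
  have hbdd : BddBelow (Set.range c) := ⟨0, fun x ⟨n, hn⟩ => hn ▸ (hcpos n).le⟩
  set L : ℝ := ⨅ n, c n with hL
  have hctend : Filter.Tendsto c Filter.atTop (nhds L) :=
    tendsto_atTop_ciInf hcanti hbdd
  have hLnonneg : 0 ≤ L := le_ciInf fun n => (hcpos n).le
  -- summable
  have hsummable : Summable (fun k => a (k + 1)) := by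
    apply summable_of_sum_range_le (c := 1 / (θ - 1)) (fun k => (hpos (k+1)).le)
    intro n
    rw [hps n]
    gcongr <;> linarith [hcpos' n]
  -- L = 0
  have hLbound : ∀ k : ℕ, L / ((k:ℝ) + 2) ≤ a (k + 1) := by
    intro k
    have h1 : L ≤ c (k + 1) := ciInf_le hbdd (k + 1)
    have h2 : c (k + 1) = ((k:ℝ) + 2) * a (k + 1) := by
      simp only [hc]; push_cast; ring
    rw [div_le_iff₀ (by positivity)]
    nlinarith [hpos (k+1)]
  have hL0 : L = 0 := by
    by_contra hne
    have hLpos : 0 < L := lt_of_le_of_ne hLnonneg (Ne.symm hne)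
    have hs2 : Summable (fun k : ℕ => L / ((k:ℝ) + 2)) :=
      Summable.of_nonneg_of_le (fun k => by positivity) hLbound hsummable
    have hs3 : Summable (fun k : ℕ => 1 / ((k:ℝ) + 2)) := by
      have := hs2.mul_left (1 / L)
      exact this.congr fun k => by rw [← mul_div_assoc, one_div_mul_cancel hLpos.ne']
    have hs4 : Summable (fun k : ℕ => 1 / ((k:ℝ))) := by
      rw [← summable_nat_add_iff 2]
      exact hs3.congr fun k => by norm_num
    exact Real.not_summable_one_div_natCast (by simpa using hs4)
  -- conclude
  have htendL : Filter.Tendsto (fun n => ∑ k ∈ Finset.range n, a (k + 1))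
      Filter.atTop (nhds (1 / (θ - 1))) := by
    have : Filter.Tendsto (fun n => (1 - c n) / (θ - 1)) Filter.atTop
        (nhds ((1 - L) / (θ - 1))) :=
      ((tendsto_const_nhds.sub hctend).div_const _)
    rw [hL0] at this
    simp only [sub_zero] at this
    convert this using 2 with n
    rw [hps n]
  have := hsummable.hasSum.tendsto_sum_nat
  have heq : (∑' k, a (k + 1)) = 1 / (θ - 1) :=
    tendsto_nhds_unique this htendL
  exact heq ▸ hsummable.hasSum


lemma lintegral_finset_prod_indep {Ω : Type*} [MeasurableSpace Ω] (μ : Measure Ω)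
    [IsProbabilityMeasure μ] (g : ℕ → Ω → ℝ≥0∞) (hmeas : ∀ j, Measurable (g j))
    (hindep : iIndepFun g μ) (s : Finset ℕ) :
    ∫⁻ ω, ∏ j ∈ s, g j ω ∂μ = ∏ j ∈ s, ∫⁻ ω, g j ω ∂μ := by
  induction s using Finset.induction_on with
  | empty => simp
  | insert i s hi ih =>
    have hpm : Measurable (∏ j ∈ s, g j) := by
      rw [show (∏ j ∈ s, g j) = fun ω => ∏ j ∈ s, g j ω from funext fun ω => by
        simp [Finset.prod_apply]]
      exact Finset.measurable_prod _ (fun j _ => hmeas j)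
    have hind : IndepFun (∏ j ∈ s, g j) (g i) μ :=
      hindep.indepFun_finsetProd_of_notMem hmeas hi
    have key := lintegral_mul_eq_lintegral_mul_lintegral_of_indepFun hpm (hmeas i) hind
    simp only [Finset.prod_insert hi]
    have h1 : ∀ ω, g i ω * ∏ j ∈ s, g j ω = ((∏ j ∈ s, g j) * g i) ω := by
      intro ω
      simp [Finset.prod_apply, mul_comm]
    simp_rw [h1]
    rw [key, mul_comm, ← ih]
    congr 1
    apply lintegral_congr
    intro ω
    simp [Finset.prod_apply]

end Aux


/-- If `τ_j` (for `j ≥ 1`) are independent exponentials with rate `j`, and `ν_i` are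
i.i.d. integrable nonnegative random variables with mean `m`, independent of the `τ_j`,
then for `θ > 1` the expectation of `∑_{i=1}^∞ ν_i e^{-θ(τ_1 + ⋯ + τ_i)}` is `m/(θ-1)`. -/
theorem expectation_series_nu_exp {Ω : Type*} [MeasurableSpace Ω]
    (μ : Measure Ω) [IsProbabilityMeasure μ]
    (τ : ℕ → Ω → ℝ) (ν : ℕ → Ω → ℝ) (m : ℝ)
    (hτ_meas : ∀ j, Measurable (τ j))
    (hν_meas : ∀ i, Measurable (ν i))
    (hτ_law : ∀ j : ℕ, 1 ≤ j → Measure.map (τ j) μ = expMeasure (j : ℝ))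
    (hτ_indep : iIndepFun τ μ)
    (hν_indep : iIndepFun ν μ)
    (hν_ident : ∀ i, IdentDistrib (ν i) (ν 0) μ μ)
    (hν_nonneg : ∀ i ω, 0 ≤ ν i ω)
    (hν_int : Integrable (ν 0) μ)
    (hν_mean : ∫ ω, ν 0 ω ∂μ = m)
    (h_cross : IndepFun (fun ω j => τ j ω) (fun ω i => ν i ω) μ)
    (θ : ℝ) (hθ : 1 < θ) :
    ∫ ω, (∑' i : ℕ, ν (i + 1) ω *
        Real.exp (-θ * ∑ j ∈ Finset.Icc 1 (i + 1), τ j ω)) ∂μ = m / (θ - 1) := by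
  have hθ0 : 0 < θ := by linarith
  have hθ1 : (0:ℝ) < θ - 1 := by linarith
  have hm0 : 0 ≤ m := hν_mean ▸ integral_nonneg (fun ω => hν_nonneg 0 ω)
  set g : ℕ → Ω → ℝ≥0∞ := fun j ω => ENNReal.ofReal (Real.exp (-θ * τ j ω)) with hg
  have hgmeas : ∀ j, Measurable (g j) := fun j => by fun_prop
  have hgindep : iIndepFun g μ :=
    hτ_indep.comp (fun _ (x : ℝ) => ENNReal.ofReal (Real.exp (-θ * x))) (fun _ => by fun_prop)
  have hSmeas : ∀ i : ℕ, Measurable (fun ω => ∑ j ∈ Finset.Icc 1 (i+1), τ j ω) :=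
    fun i => Finset.measurable_sum _ (fun j _ => hτ_meas j)
  have htermmeas : ∀ i : ℕ, Measurable (fun ω =>
      ENNReal.ofReal (ν (i+1) ω * Real.exp (-θ * ∑ j ∈ Finset.Icc 1 (i+1), τ j ω))) := by
    intro i
    apply Measurable.ennreal_ofReal
    exact (hν_meas (i+1)).mul (((hSmeas i).const_mul (-θ)).exp)
  -- per-factor value
  have hsingle : ∀ j : ℕ, 1 ≤ j → ∫⁻ ω, g j ω ∂μ = ENNReal.ofReal ((j:ℝ) / ((j:ℝ) + θ)) := by
    intro j hj
    have hmexp : Measurable fun x : ℝ => ENNReal.ofReal (Real.exp (-θ * x)) := by fun_prop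
    have h1 : ∫⁻ ω, g j ω ∂μ
        = ∫⁻ x, ENNReal.ofReal (Real.exp (-θ * x)) ∂(Measure.map (τ j) μ) :=
      (lintegral_map hmexp (hτ_meas j)).symm
    rw [h1, hτ_law j hj, exp_mgf (Nat.cast_pos.mpr hj) hθ0]
  -- exponent as product
  have hexp : ∀ (i : ℕ) (ω : Ω),
      ENNReal.ofReal (Real.exp (-θ * ∑ j ∈ Finset.Icc 1 (i+1), τ j ω))
        = ∏ j ∈ Finset.Icc 1 (i+1), g j ω := by
    intro i ω
    rw [Finset.mul_sum, Real.exp_sum,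
      ENNReal.ofReal_prod_of_nonneg (fun _ _ => (Real.exp_pos _).le)]
  -- nu lintegral
  have hνl : ∀ i : ℕ, ∫⁻ ω, ENNReal.ofReal (ν i ω) ∂μ = ENNReal.ofReal m := by
    intro i
    have h1 : ∫⁻ ω, ENNReal.ofReal (ν i ω) ∂μ = ∫⁻ ω, ENNReal.ofReal (ν 0 ω) ∂μ :=
      ((hν_ident i).comp ENNReal.measurable_ofReal).lintegral_eq
    rw [h1, ← ofReal_integral_eq_lintegral_ofReal hν_int
      (Filter.Eventually.of_forall (hν_nonneg 0)), hν_mean]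
  -- cross independence
  have hcross : ∀ i : ℕ, IndepFun (fun ω => ENNReal.ofReal (ν (i+1) ω))
      (fun ω => ∏ j ∈ Finset.Icc 1 (i+1), g j ω) μ := by
    intro i
    have hφ : Measurable (fun t : ℕ → ℝ =>
        ∏ j ∈ Finset.Icc 1 (i+1), ENNReal.ofReal (Real.exp (-θ * t j))) := by
      apply Finset.measurable_prod
      intro j _
      fun_prop
    have hψ : Measurable (fun v : ℕ → ℝ => ENNReal.ofReal (v (i+1))) := by fun_prop
    exact (h_cross.symm.comp hψ hφ)
  -- per-term lintegral
  have hterm : ∀ i : ℕ,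
      ∫⁻ ω, ENNReal.ofReal (ν (i+1) ω *
        Real.exp (-θ * ∑ j ∈ Finset.Icc 1 (i+1), τ j ω)) ∂μ
      = ENNReal.ofReal m * ENNReal.ofReal (∏ j ∈ Finset.Icc 1 (i+1), ((j:ℝ) / ((j:ℝ) + θ))) := by
    intro i
    have heq : ∀ ω, ENNReal.ofReal (ν (i+1) ω *
          Real.exp (-θ * ∑ j ∈ Finset.Icc 1 (i+1), τ j ω))
        = ENNReal.ofReal (ν (i+1) ω) * ∏ j ∈ Finset.Icc 1 (i+1), g j ω := by
      intro ω
      rw [ENNReal.ofReal_mul (hν_nonneg _ ω), hexp]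
    simp_rw [heq]
    have hprodmeas : Measurable (fun ω => ∏ j ∈ Finset.Icc 1 (i+1), g j ω) := by
      apply Finset.measurable_prod
      exact fun j _ => hgmeas j
    rw [lintegral_mul_eq_lintegral_mul_lintegral_of_indepFun''
      (((hν_meas (i+1)).ennreal_ofReal).aemeasurable)
      hprodmeas.aemeasurable (hcross i), hνl,
      lintegral_finset_prod_indep μ g hgmeas hgindep]
    congr 1
    rw [Finset.prod_congr rfl (fun j hj => hsingle j (Finset.mem_Icc.mp hj).1),
      ← ENNReal.ofReal_prod_of_nonneg]
    intro j hj
    have : (0:ℝ) < j := Nat.cast_pos.mpr (Finset.mem_Icc.mp hj).1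
    positivity
  -- total lintegral
  set G : Ω → ℝ≥0∞ := fun ω => ∑' i : ℕ, ENNReal.ofReal (ν (i+1) ω *
    Real.exp (-θ * ∑ j ∈ Finset.Icc 1 (i+1), τ j ω)) with hG
  have hGmeas : Measurable G := Measurable.ennreal_tsum htermmeas
  have hanonneg : ∀ i : ℕ, (0:ℝ) ≤ ∏ j ∈ Finset.Icc 1 (i+1), ((j:ℝ) / ((j:ℝ) + θ)) := by
    intro i
    apply Finset.prod_nonneg
    intro j hj
    have : (0:ℝ) < j := Nat.cast_pos.mpr (Finset.mem_Icc.mp hj).1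
    positivity
  have hGint : ∫⁻ ω, G ω ∂μ = ENNReal.ofReal (m / (θ - 1)) := by
    rw [hG, lintegral_tsum (fun i => (htermmeas i).aemeasurable)]
    simp_rw [hterm]
    rw [ENNReal.tsum_mul_left, ← ENNReal.ofReal_tsum_of_nonneg hanonneg
      (telescope_sum hθ).summable, (telescope_sum hθ).tsum_eq, ← ENNReal.ofReal_mul hm0]
    congr 1
    field_simp
  have hae : ∀ᵐ ω ∂μ, G ω < ∞ :=
    ae_lt_top hGmeas (by rw [hGint]; exact ENNReal.ofReal_ne_top)
  have hpt : ∀ ω : Ω, (∑' i : ℕ, ν (i + 1) ω *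
      Real.exp (-θ * ∑ j ∈ Finset.Icc 1 (i + 1), τ j ω)) = (G ω).toReal := by
    intro ω
    rw [hG, ENNReal.tsum_toReal_eq (fun i => ENNReal.ofReal_ne_top)]
    apply tsum_congr
    intro i
    rw [ENNReal.toReal_ofReal (mul_nonneg (hν_nonneg _ ω) (Real.exp_pos _).le)]
  calc ∫ ω, (∑' i : ℕ, ν (i + 1) ω *
        Real.exp (-θ * ∑ j ∈ Finset.Icc 1 (i + 1), τ j ω)) ∂μ
      = ∫ ω, (G ω).toReal ∂μ := by simp_rw [hpt]
    _ = (∫⁻ ω, G ω ∂μ).toReal := integral_toReal hGmeas.aemeasurable hae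
    _ = m / (θ - 1) := by rw [hGint]; exact ENNReal.toReal_ofReal (by positivity)
end

section
/- Let M > 0 be a real number and let (e_i)_{i≥0} be a sequence of independent real random variables such that e_i is exponentially distributed with rate 1 + iM. Then the partial sums S_n = ∑_{i=0}^{n−1} e_i tend to +∞ almost surely as n → ∞. -/
open MeasureTheory ProbabilityTheory Real Set Filter Topology

lemma prod_ratio_tendsto_zero {M : ℝ} (hM : 0 < M) :
    Tendsto (fun n => ∏ i ∈ Finset.range n, ((1 + (i:ℝ) * M) / (1 + (i:ℝ) * M + 1)))
      atTop (𝓝 0) := by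
  set r : ℕ → ℝ := fun i => 1 + (i:ℝ) * M with hrdef
  have hrpos : ∀ i, 0 < r i := fun i => by positivity
  have hA : Tendsto (fun n => ∑ i ∈ Finset.range n, 1 / (r i + 1)) atTop atTop := by
    have hH : Tendsto (fun n => (2 + M)⁻¹ * ∑ i ∈ Finset.range n, 1 / ((i:ℝ) + 1))
        atTop atTop :=
      Real.tendsto_sum_range_one_div_nat_succ_atTop.const_mul_atTop (by positivity)
    refine tendsto_atTop_mono (fun n => ?_) hH
    rw [Finset.mul_sum]
    refine Finset.sum_le_sum fun i _ => ?_
    have h1 : (2 + M)⁻¹ * (1 / ((i:ℝ) + 1)) = 1 / ((2 + M) * ((i:ℝ) + 1)) := by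
      rw [one_div, one_div, ← mul_inv]
    rw [h1]
    apply one_div_le_one_div_of_le (by positivity)
    have hi : (0:ℝ) ≤ (i:ℝ) := Nat.cast_nonneg i
    simp only [hrdef]
    nlinarith
  have hub : ∀ n, ∏ i ∈ Finset.range n, (r i / (r i + 1))
      ≤ Real.exp (-(∑ i ∈ Finset.range n, 1 / (r i + 1))) := by
    intro n
    calc ∏ i ∈ Finset.range n, (r i / (r i + 1))
        ≤ ∏ i ∈ Finset.range n, Real.exp (-(1 / (r i + 1))) := by
          refine Finset.prod_le_prod (fun i _ => by positivity) fun i _ => ?_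
          have h2 := Real.add_one_le_exp (-(1 / (r i + 1)))
          have h3 : r i / (r i + 1) = -(1 / (r i + 1)) + 1 := by
            have hne : r i + 1 ≠ 0 := by linarith [hrpos i]
            rw [neg_add_eq_sub, one_sub_div hne]; ring
          rw [h3]; exact h2
      _ = Real.exp (∑ i ∈ Finset.range n, -(1 / (r i + 1))) := (Real.exp_sum _ _).symm
      _ = Real.exp (-(∑ i ∈ Finset.range n, 1 / (r i + 1))) := by rw [Finset.sum_neg_distrib]
  refine squeeze_zero (fun n => Finset.prod_nonneg fun i _ => by positivity) hub ?_
  exact Real.tendsto_exp_atBot.comp (tendsto_neg_atBot_iff.mpr hA)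

lemma expo_exp_integral {r : ℝ} (hr : 0 < r) :
    ∫ x, Real.exp (-x) ∂(expMeasure r) = r / (r + 1) := by
  have hr1 : (0:ℝ) < r + 1 := by linarith
  have hmeas : Measurable (exponentialPDF r) :=
    ENNReal.measurable_ofReal.comp (measurable_exponentialPDFReal r)
  have hexp : expMeasure r = MeasureTheory.volume.withDensity (exponentialPDF r) := rfl
  set g : ℝ → ℝ := Set.indicator (Ici 0) (fun x => r * Real.exp (-(r+1) * x)) with hg
  have hpt : ∀ x, exponentialPDF r x * ENNReal.ofReal (Real.exp (-x)) = ENNReal.ofReal (g x) := by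
    intro x
    rcases le_or_gt 0 x with hx | hx
    · rw [exponentialPDF_of_nonneg hx, hg, Set.indicator_of_mem (show x ∈ Ici 0 from hx),
        ← ENNReal.ofReal_mul (by positivity)]
      congr 1
      rw [mul_assoc, ← Real.exp_add]
      ring_nf
    · rw [exponentialPDF_of_neg hx, hg, Set.indicator_of_notMem (by simpa using hx), zero_mul,
        ENNReal.ofReal_zero]
  have hint : Integrable g := by
    rw [hg, integrable_indicator_iff measurableSet_Ici]
    rw [integrableOn_Ici_iff_integrableOn_Ioi]
    exact (exp_neg_integrableOn_Ioi 0 hr1).const_mul r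
  have hgnn : 0 ≤ g := by
    intro x
    rw [hg]
    apply Set.indicator_nonneg
    intro y _
    positivity
  rw [integral_eq_lintegral_of_nonneg_ae (ae_of_all _ fun x => (Real.exp_pos _).le)
      (Real.measurable_exp.comp measurable_neg).aestronglyMeasurable, hexp,
    lintegral_withDensity_eq_lintegral_mul _ hmeas
      (show Measurable fun x : ℝ => ENNReal.ofReal (Real.exp (-x)) from ENNReal.measurable_ofReal.comp (Real.measurable_exp.comp measurable_neg))]
  simp only [Pi.mul_apply, Function.comp_apply]
  rw [show (fun x => exponentialPDF r x * ENNReal.ofReal (Real.exp (-x)))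
      = fun x => ENNReal.ofReal (g x) from funext hpt]
  rw [← ofReal_integral_eq_lintegral_ofReal hint (ae_of_all _ hgnn)]
  rw [ENNReal.toReal_ofReal (integral_nonneg hgnn)]
  rw [hg, integral_indicator measurableSet_Ici, integral_Ici_eq_integral_Ioi,
    MeasureTheory.integral_const_mul]
  have := integral_comp_mul_left_Ioi (fun x => Real.exp (-x)) 0 hr1
  simp only [mul_zero, smul_eq_mul] at this
  have h2 : ∫ x in Ioi (0:ℝ), Real.exp (-(r+1) * x) = (r+1)⁻¹ := by
    have h3 : (fun x => Real.exp (-(r+1) * x)) = fun x => Real.exp (-((r+1) * x)) := by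
      funext x; ring_nf
    rw [h3, this, integral_exp_neg_Ioi_zero, mul_one]
  rw [h2, div_eq_mul_inv]

/-- If `e_i` are independent exponential random variables with rate `1 + iM` (`M > 0`),
then the partial sums `∑_{i=0}^{n-1} e_i` tend to `+∞` almost surely. -/
theorem tendsto_sum_exponential_atTop {Ω : Type*} [MeasurableSpace Ω]
    (μ : Measure Ω) [IsProbabilityMeasure μ]
    (M : ℝ) (hM : 0 < M) (e : ℕ → Ω → ℝ)
    (h_meas : ∀ i, Measurable (e i))
    (h_indep : iIndepFun e μ)
    (h_law : ∀ i : ℕ, Measure.map (e i) μ = expMeasure (1 + (i : ℝ) * M)) :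
    ∀ᵐ ω ∂μ, Filter.Tendsto (fun n => ∑ i ∈ Finset.range n, e i ω)
      Filter.atTop Filter.atTop := by
  set r : ℕ → ℝ := fun i => 1 + (i:ℝ) * M with hrdef
  have hrpos : ∀ i, 0 < r i := fun i => by positivity
  -- a.e. nonnegativity
  have hnn : ∀ᵐ ω ∂μ, ∀ i, 0 ≤ e i ω := by
    rw [ae_all_iff]
    intro i
    have h0 : μ (e i ⁻¹' (Iio 0)) = 0 := by
      rw [← Measure.map_apply (h_meas i) measurableSet_Iio, h_law i,
        show expMeasure (r i) = MeasureTheory.volume.withDensity (exponentialPDF (r i)) from rfl,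
        withDensity_apply _ measurableSet_Iio]
      exact lintegral_exponentialPDF_of_nonpos le_rfl
    filter_upwards [measure_eq_zero_iff_ae_notMem.mp h0] with ω hω
    simpa using hω
  -- the Laplace transform of partial sums
  set F : ℕ → Ω → ℝ := fun n ω => Real.exp (-(∑ i ∈ Finset.range n, e i ω)) with hF
  have hFmeas : ∀ n, Measurable (F n) := fun n =>
    (Real.measurable_exp.comp (Finset.measurable_sum _ (fun i _ => h_meas i)).neg)
  have hmgf : ∀ i, mgf (e i) μ (-1) = r i / (r i + 1) := by
    intro i
    have h1 : mgf (e i) μ (-1) = ∫ ω, Real.exp (-1 * e i ω) ∂μ := rfl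
    rw [h1, show (fun ω => Real.exp (-1 * e i ω)) = fun ω => Real.exp (-(e i ω)) by
        funext ω; rw [neg_one_mul],
      show (∫ ω, Real.exp (-(e i ω)) ∂μ) = ∫ x, Real.exp (-x) ∂(Measure.map (e i) μ) from
        (integral_map (f := fun x => Real.exp (-x)) (h_meas i).aemeasurable
          (Real.measurable_exp.comp measurable_neg).aestronglyMeasurable).symm,
      h_law i]
    exact expo_exp_integral (hrpos i)
  have hFint : ∀ n, ∫ ω, F n ω ∂μ = ∏ i ∈ Finset.range n, (r i / (r i + 1)) := by
    intro n
    have h2 := h_indep.mgf_sum (t := -1) h_meas (Finset.range n)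
    have h3 : mgf (∑ i ∈ Finset.range n, e i) μ (-1) = ∫ ω, F n ω ∂μ := by
      rw [mgf]
      congr 1
      funext ω
      rw [hF]
      simp [Finset.sum_apply, neg_one_mul]
    rw [← h3, h2]
    exact Finset.prod_congr rfl fun i _ => hmgf i
  have hF0 : Tendsto (fun n => ∫ ω, F n ω ∂μ) atTop (𝓝 0) := by
    simp only [hFint]
    exact prod_ratio_tendsto_zero hM
  -- L := pointwise infimum of F n
  set L : Ω → ℝ := fun ω => ⨅ n, F n ω with hL
  have hFpos : ∀ n ω, 0 < F n ω := fun n ω => Real.exp_pos _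
  have hbdd : ∀ ω, BddBelow (range fun n => F n ω) :=
    fun ω => ⟨0, by rintro x ⟨n, rfl⟩; exact (hFpos n ω).le⟩
  have hLle : ∀ n ω, L ω ≤ F n ω := fun n ω => ciInf_le (hbdd ω) n
  have hLnn : ∀ ω, 0 ≤ L ω := fun ω => le_ciInf fun n => (hFpos n ω).le
  -- integrability of F n
  have hFintg : ∀ n, Integrable (F n) μ := by
    intro n
    refine Integrable.mono' (integrable_const 1) (hFmeas n).aestronglyMeasurable ?_
    filter_upwards [hnn] with ω hω
    rw [Real.norm_eq_abs, abs_of_pos (hFpos n ω)]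
    exact Real.exp_le_one_iff.mpr (by simpa using Finset.sum_nonneg fun i _ => hω i)
  -- Markov: μ {ε ≤ L} = 0 for ε > 0
  have hmark : ∀ ε : ℝ, 0 < ε → μ {ω | ε ≤ L ω} = 0 := by
    intro ε hε
    have key : ∀ n, ε * (μ {ω | ε ≤ L ω}).toReal ≤ ∫ ω, F n ω ∂μ := by
      intro n
      calc ε * (μ {ω | ε ≤ L ω}).toReal
          ≤ ε * (μ {ω | ε ≤ F n ω}).toReal := by
            gcongr
            · exact (measure_ne_top μ _)
            · exact hLle n _
        _ ≤ ∫ ω, F n ω ∂μ :=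
            mul_meas_ge_le_integral_of_nonneg (ae_of_all _ fun ω => (hFpos n ω).le)
              (hFintg n) ε
    have hle0 : ε * (μ {ω | ε ≤ L ω}).toReal ≤ 0 :=
      le_of_tendsto_of_tendsto' tendsto_const_nhds hF0 key
    have : (μ {ω | ε ≤ L ω}).toReal = 0 := by
      have h4 : 0 ≤ (μ {ω | ε ≤ L ω}).toReal := ENNReal.toReal_nonneg
      nlinarith
    exact (ENNReal.toReal_eq_zero_iff _).mp this |>.resolve_right (measure_ne_top μ _)
  have hL0 : ∀ᵐ ω ∂μ, L ω = 0 := by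
    have hsub : {ω | L ω ≠ 0} ⊆ ⋃ k : ℕ, {ω | 1 / ((k:ℝ) + 1) ≤ L ω} := by
      intro ω hω
      have hpos : 0 < L ω := lt_of_le_of_ne (hLnn ω) (Ne.symm hω)
      obtain ⟨k, hk⟩ := exists_nat_one_div_lt hpos
      exact mem_iUnion.mpr ⟨k, hk.le⟩
    have : μ {ω | L ω ≠ 0} = 0 := by
      refine measure_mono_null hsub ?_
      refine le_antisymm (le_trans (measure_iUnion_le _) ?_) zero_le
      simp only [hmark (1 / ((_:ℕ) + 1 : ℝ)) (by positivity)]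
      simp [fun k : ℕ => hmark (1 / ((k:ℝ) + 1)) (by positivity)]
    exact this
  -- conclusion
  filter_upwards [hnn, hL0] with ω hω hLω
  have hanti : Antitone fun n => F n ω := by
    intro m n hmn
    simp only [hF]
    apply Real.exp_le_exp.mpr
    apply neg_le_neg
    exact Finset.sum_le_sum_of_subset_of_nonneg (Finset.range_subset_range.mpr hmn)
      (fun i _ _ => hω i)
  have htend : Tendsto (fun n => F n ω) atTop (𝓝 (L ω)) :=
    tendsto_atTop_ciInf hanti (hbdd ω)
  rw [hLω] at htend
  simpa [hF] using htend
end
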